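/- arXiv:math/0607254 — 7 statements merged into one kernel-verified Lean document; each statement's English description precedes it below -/
import Mathlib

section
/- Let C be a code over an alphabet A, and let Z_n, Q_n (n ≥ 1) be defined by the Lazard right length recurrence. Then every element w of C* admits a unique factorization w = u_1·u_2⋯u_r (r ≥ 0) such that each u_t belongs to ⋃_n Q_n and the lengths are weakly increasing: |u_1| ≤ |u_2| ≤ ⋯ ≤ |u_r|. (Equivalently, the sequence (Q_n)_{n≥1}, with empty members deleted, is the right length factorization of the free monoid C*.) -/
def IsCode {A : Type*} (C : Set (FreeMonoid A)) : Prop :=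
  (∀ c ∈ C, c ≠ 1) ∧
  ∀ l l' : List (FreeMonoid A),
    (∀ c ∈ l, c ∈ C) → (∀ c ∈ l', c ∈ C) → l.prod = l'.prod → l = l'

def lazardZ {A : Type*} (C : Set (FreeMonoid A)) : ℕ → Set (FreeMonoid A)
  | 0 => ∅
  | 1 => C
  | (n + 2) =>
      {w | ∃ z ∈ lazardZ C (n + 1), z.length ≠ n + 1 ∧
        ∃ u ∈ Submonoid.closure
          {v | v ∈ lazardZ C (n + 1) ∧ v.length = n + 1}, w = z * u}

def lazardQ {A : Type*} (C : Set (FreeMonoid A)) (n : ℕ) : Set (FreeMonoid A) :=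
  {w | w ∈ lazardZ C n ∧ w.length = n}

/-!
Lazard elimination: if `Z` is a code and `Q ⊆ Z`, then every word of `Z*` factors uniquely as
`q · z` with `q ∈ Q*` and `z ∈ Z'*`, where `Z' = (Z \ Q) Q*` is again a code. The reason is
that a word over `Z` parses uniquely as a run of letters from `Q` followed by blocks, each
consisting of one letter outside `Q` and then a run of letters from `Q`.

Applied to `Z = Z_n`, `Q = Q_n`, this splits `Z_n*` as `Q_n* · Z_{n+1}*`. Since every word of `Z_n`
has length at least `n`, iterating from `n = 1` peels off the factors of length `1, 2, 3, …` in
turn and stops once `n` exceeds the length of the word.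
-/

section Elimination

variable {α : Type*}

def IsLazardBlock (Q : Set α) (b : List α) : Prop :=
  ∃ z q, b = z :: q ∧ z ∉ Q ∧ ∀ x ∈ q, x ∈ Q

variable {Q : Set α}

theorem append_inj_of_head?_not_mem {k k' J J' : List α}
    (hk : ∀ x ∈ k, x ∈ Q) (hk' : ∀ x ∈ k', x ∈ Q)
    (hJ : ∀ x ∈ J.head?, x ∉ Q) (hJ' : ∀ x ∈ J'.head?, x ∉ Q)
    (h : k ++ J = k' ++ J') : k = k' ∧ J = J' := by
  classical
  have takeWhile_eq : ∀ {k J : List α}, (∀ x ∈ k, x ∈ Q) → (∀ x ∈ J.head?, x ∉ Q) →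
      (k ++ J).takeWhile (· ∈ Q) = k := by
    intro k J hk hJ
    rw [List.takeWhile_append_of_pos (by simpa using hk)]
    cases J <;> simp_all
  have hkk' : k = k' := by rw [← takeWhile_eq hk hJ, h, takeWhile_eq hk' hJ']
  subst hkk'
  exact ⟨rfl, List.append_cancel_left h⟩

theorem head?_flatten_not_mem {B : List (List α)} (hB : ∀ b ∈ B, IsLazardBlock Q b) :
    ∀ x ∈ B.flatten.head?, x ∉ Q := by
  cases B with
  | nil => simp
  | cons b B =>
    obtain ⟨z, q, rfl, hz, -⟩ := hB b List.mem_cons_self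
    simpa using hz

theorem append_flatten_inj_of_isLazardBlock {k k' : List α} {B B' : List (List α)}
    (hk : ∀ x ∈ k, x ∈ Q) (hk' : ∀ x ∈ k', x ∈ Q)
    (hB : ∀ b ∈ B, IsLazardBlock Q b) (hB' : ∀ b ∈ B', IsLazardBlock Q b)
    (h : k ++ B.flatten = k' ++ B'.flatten) : k = k' ∧ B = B' := by
  induction B generalizing k k' B' with
  | nil =>
    obtain ⟨rfl, hnil⟩ := append_inj_of_head?_not_mem hk hk' (by simp)
      (head?_flatten_not_mem hB') h
    refine ⟨rfl, (List.eq_nil_iff_forall_not_mem.mpr fun b hb => ?_).symm⟩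
    obtain ⟨z, q, rfl, -⟩ := hB' b hb
    simpa using List.flatten_eq_nil_iff.mp hnil.symm _ hb
  | cons b B ih =>
    obtain ⟨rfl, hflat⟩ := append_inj_of_head?_not_mem hk hk' (head?_flatten_not_mem hB)
      (head?_flatten_not_mem hB') h
    obtain ⟨z, q, rfl, -, hq⟩ := hB _ List.mem_cons_self
    cases B' with
    | nil => simp at hflat
    | cons b' B' =>
      obtain ⟨z', q', rfl, -, hq'⟩ := hB' _ List.mem_cons_self
      simp only [List.flatten_cons, List.cons_append, List.cons.injEq] at hflat
      obtain ⟨rfl, hrest⟩ := hflat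
      obtain ⟨rfl, rfl⟩ := ih hq hq' (fun b hb => hB b (List.mem_cons_of_mem _ hb))
        (fun b hb => hB' b (List.mem_cons_of_mem _ hb)) hrest
      exact ⟨rfl, rfl⟩

end Elimination

section FreeMonoid

variable {A : Type*} {Z Q : Set (FreeMonoid A)}

def lazardStep (Z Q : Set (FreeMonoid A)) : Set (FreeMonoid A) :=
  {w | ∃ z ∈ Z, z ∉ Q ∧ ∃ u ∈ Submonoid.closure Q, w = z * u}

theorem exists_lazardBlocks (hQZ : Q ⊆ Z) {m : List (FreeMonoid A)}
    (hm : ∀ x ∈ m, x ∈ lazardStep Z Q) :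
    ∃ B : List (List (FreeMonoid A)), (∀ b ∈ B, IsLazardBlock Q b) ∧
      (∀ x ∈ B.flatten, x ∈ Z) ∧ B.map List.prod = m := by
  induction m with
  | nil => exact ⟨[], by simp, by simp, rfl⟩
  | cons w m ih =>
    obtain ⟨B, hB, hBZ, rfl⟩ := ih fun x hx => hm x (List.mem_cons_of_mem _ hx)
    obtain ⟨z, hz, hzQ, u, hu, rfl⟩ := hm w List.mem_cons_self
    obtain ⟨q, hq, rfl⟩ := Submonoid.exists_list_of_mem_closure hu
    refine ⟨(z :: q) :: B, ?_, ?_, by simp⟩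
    · simpa using ⟨⟨z, q, rfl, hzQ, hq⟩, hB⟩
    · simp only [List.flatten_cons, List.cons_append, List.mem_cons, List.mem_append]
      rintro x (rfl | hx | hx)
      exacts [hz, hQZ (hq x hx), hBZ x hx]

theorem IsCode.eq_and_eq_of_prod_mul_prod_eq (hZ : IsCode Z) (hQZ : Q ⊆ Z)
    {k k' m m' : List (FreeMonoid A)} (hk : ∀ x ∈ k, x ∈ Q) (hk' : ∀ x ∈ k', x ∈ Q)
    (hm : ∀ x ∈ m, x ∈ lazardStep Z Q) (hm' : ∀ x ∈ m', x ∈ lazardStep Z Q)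
    (h : k.prod * m.prod = k'.prod * m'.prod) : k = k' ∧ m = m' := by
  obtain ⟨B, hB, hBZ, rfl⟩ := exists_lazardBlocks hQZ hm
  obtain ⟨B', hB', hBZ', rfl⟩ := exists_lazardBlocks hQZ hm'
  have hmemZ : ∀ {k : List (FreeMonoid A)} {B : List (List (FreeMonoid A))},
      (∀ x ∈ k, x ∈ Q) → (∀ x ∈ B.flatten, x ∈ Z) → ∀ x ∈ k ++ B.flatten, x ∈ Z := by
    intro k B hk hBZ x hx
    rcases List.mem_append.mp hx with hx | hx
    exacts [hQZ (hk x hx), hBZ x hx]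
  have hwords : k ++ B.flatten = k' ++ B'.flatten :=
    hZ.2 _ _ (hmemZ hk hBZ) (hmemZ hk' hBZ') (by simpa [List.prod_flatten] using h)
  obtain ⟨rfl, rfl⟩ := append_flatten_inj_of_isLazardBlock hk hk' hB hB' hwords
  exact ⟨rfl, rfl⟩

theorem isCode_lazardStep (hZ : IsCode Z) (hQZ : Q ⊆ Z) : IsCode (lazardStep Z Q) := by
  refine ⟨?_, fun m m' hm hm' h => ?_⟩
  · rintro _ ⟨z, hz, -, u, -, rfl⟩ h1
    exact hZ.1 z hz (eq_one_of_mul_right' h1)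
  · exact (hZ.eq_and_eq_of_prod_mul_prod_eq hQZ (k := []) (k' := []) (by simp) (by simp)
      hm hm' (by simpa using h)).2

theorem IsCode.eq_and_eq_of_prod_mul_eq (hZ : IsCode Z) (hQZ : Q ⊆ Z)
    {k k' : List (FreeMonoid A)} {z z' : FreeMonoid A}
    (hk : ∀ x ∈ k, x ∈ Q) (hk' : ∀ x ∈ k', x ∈ Q)
    (hz : z ∈ Submonoid.closure (lazardStep Z Q)) (hz' : z' ∈ Submonoid.closure (lazardStep Z Q))
    (h : k.prod * z = k'.prod * z') : k = k' ∧ z = z' := by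
  obtain ⟨m, hm, rfl⟩ := Submonoid.exists_list_of_mem_closure hz
  obtain ⟨m', hm', rfl⟩ := Submonoid.exists_list_of_mem_closure hz'
  obtain ⟨rfl, rfl⟩ := hZ.eq_and_eq_of_prod_mul_prod_eq hQZ hk hk' hm hm' h
  exact ⟨rfl, rfl⟩

theorem exists_prod_mul_of_mem_closure {w : FreeMonoid A} (hw : w ∈ Submonoid.closure Z) :
    ∃ k : List (FreeMonoid A), (∀ x ∈ k, x ∈ Q) ∧
      ∃ z ∈ Submonoid.closure (lazardStep Z Q), w = k.prod * z := by
  induction hw using Submonoid.closure_induction_left with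
  | one => exact ⟨[], by simp, 1, one_mem _, by simp⟩
  | mul_left a ha y _ ih =>
    obtain ⟨k, hk, z, hz, rfl⟩ := ih
    by_cases haQ : a ∈ Q
    · refine ⟨a :: k, ?_, z, hz, by simp [mul_assoc]⟩
      simpa using ⟨haQ, hk⟩
    · have hstep : a * k.prod ∈ lazardStep Z Q :=
        ⟨a, ha, haQ, k.prod, Submonoid.list_prod_mem _ fun x hx =>
          Submonoid.subset_closure (hk x hx), rfl⟩
      exact ⟨[], by simp, _, mul_mem (Submonoid.subset_closure hstep) hz, by simp [mul_assoc]⟩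

theorem closure_lazardStep_le (hQZ : Q ⊆ Z) :
    Submonoid.closure (lazardStep Z Q) ≤ Submonoid.closure Z := by
  refine Submonoid.closure_le.mpr ?_
  rintro _ ⟨z, hz, -, u, hu, rfl⟩
  exact mul_mem (Submonoid.subset_closure hz) (Submonoid.closure_mono hQZ hu)

end FreeMonoid

section LazardSequence

variable {A : Type*} {C : Set (FreeMonoid A)} {n : ℕ}

theorem lazardQ_subset_lazardZ : lazardQ C n ⊆ lazardZ C n := fun _ hw => hw.1

theorem lazardZ_succ (hn : 1 ≤ n) :
    lazardZ C (n + 1) = lazardStep (lazardZ C n) (lazardQ C n) := by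
  obtain ⟨n, rfl⟩ := Nat.exists_eq_add_of_le' hn
  ext w
  constructor
  · rintro ⟨z, hz, hzn, u, hu, rfl⟩
    exact ⟨z, hz, fun hzQ => hzn hzQ.2, u, hu, rfl⟩
  · rintro ⟨z, hz, hzQ, u, hu, rfl⟩
    exact ⟨z, hz, fun hzn => hzQ ⟨hz, hzn⟩, u, hu, rfl⟩

theorem isCode_lazardZ (hC : IsCode C) (hn : 1 ≤ n) : IsCode (lazardZ C n) := by
  induction n, hn using Nat.le_induction with
  | base => exact hC
  | succ n hn ih => rw [lazardZ_succ hn]; exact isCode_lazardStep ih lazardQ_subset_lazardZ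

theorem le_length_of_mem_lazardZ (hC : ∀ c ∈ C, c ≠ 1) (hn : 1 ≤ n) {z : FreeMonoid A}
    (hz : z ∈ lazardZ C n) : n ≤ z.length := by
  induction n, hn using Nat.le_induction generalizing z with
  | base => exact Nat.one_le_iff_ne_zero.mpr (mt FreeMonoid.length_eq_zero.mp (hC z hz))
  | succ n hn ih =>
    rw [lazardZ_succ hn] at hz
    obtain ⟨z, hz, hzQ, u, -, rfl⟩ := hz
    have hzn : z.length ≠ n := fun h => hzQ ⟨hz, h⟩
    have := ih hz
    rw [FreeMonoid.length_mul]
    omega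

theorem eq_one_of_mem_closure_lazardZ (hC : ∀ c ∈ C, c ≠ 1) (hn : 1 ≤ n) {w : FreeMonoid A}
    (hw : w ∈ Submonoid.closure (lazardZ C n)) (hlt : w.length < n) : w = 1 := by
  induction hw using Submonoid.closure_induction_left with
  | one => rfl
  | mul_left z hz y _ _ =>
    have := le_length_of_mem_lazardZ hC hn hz
    rw [FreeMonoid.length_mul] at hlt
    omega

theorem closure_lazardZ_antitone (hn : 1 ≤ n) {m : ℕ} (hnm : n ≤ m) :
    Submonoid.closure (lazardZ C m) ≤ Submonoid.closure (lazardZ C n) := by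
  induction m, hnm using Nat.le_induction with
  | base => exact le_rfl
  | succ m hnm ih =>
    rw [lazardZ_succ (hn.trans hnm)]
    exact (closure_lazardStep_le lazardQ_subset_lazardZ).trans ih

variable (C n) in
def IsLazardFactorization (l : List (FreeMonoid A)) : Prop :=
  (∀ u ∈ l, ∃ m, n ≤ m ∧ u ∈ lazardQ C m) ∧ l.Pairwise (fun u v => u.length ≤ v.length)

namespace IsLazardFactorization

variable {l : List (FreeMonoid A)}

theorem prod_mem_closure (hn : 1 ≤ n) (hl : IsLazardFactorization C n l) :
    l.prod ∈ Submonoid.closure (lazardZ C n) :=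
  Submonoid.list_prod_mem _ fun u hu => by
    obtain ⟨m, hnm, hu⟩ := hl.1 u hu
    exact closure_lazardZ_antitone hn hnm (Submonoid.subset_closure hu.1)

theorem eq_nil_of_length_prod_lt (hl : IsLazardFactorization C n l) (hlt : l.prod.length < n) :
    l = [] := by
  refine List.eq_nil_iff_forall_not_mem.mpr fun u hu => ?_
  obtain ⟨m, hnm, -, hum⟩ := hl.1 u hu
  obtain ⟨s, t, rfl⟩ := List.append_of_mem hu
  simp only [List.prod_append, List.prod_cons, FreeMonoid.length_mul] at hlt
  omega

theorem append {k : List (FreeMonoid A)} (hk : ∀ x ∈ k, x ∈ lazardQ C n)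
    (hl : IsLazardFactorization C (n + 1) l) : IsLazardFactorization C n (k ++ l) := by
  refine ⟨fun u hu => ?_, List.pairwise_append.mpr ⟨?_, hl.2, fun x hx y hy => ?_⟩⟩
  · rcases List.mem_append.mp hu with hu | hu
    · exact ⟨n, le_rfl, hk u hu⟩
    · obtain ⟨m, hm, hu⟩ := hl.1 u hu
      exact ⟨m, by omega, hu⟩
  · exact List.pairwise_of_forall_mem_list fun x hx y hy => ((hk x hx).2.trans (hk y hy).2.symm).le
  · obtain ⟨m, hm, -, hym⟩ := hl.1 y hy
    rw [(hk x hx).2, hym]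
    omega

theorem exists_append (hl : IsLazardFactorization C n l) :
    ∃ k r, l = k ++ r ∧ (∀ x ∈ k, x ∈ lazardQ C n) ∧ IsLazardFactorization C (n + 1) r := by
  induction l with
  | nil => exact ⟨[], [], rfl, by simp, by simp [IsLazardFactorization]⟩
  | cons a t ih =>
    obtain ⟨hmem, hpair⟩ := hl
    rw [List.pairwise_cons] at hpair
    obtain ⟨m, hnm, ha⟩ := hmem a List.mem_cons_self
    rcases hnm.eq_or_lt with rfl | hlt
    · obtain ⟨k, r, rfl, hk, hr⟩ :=
        ih ⟨fun u hu => hmem u (List.mem_cons_of_mem _ hu), hpair.2⟩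
      refine ⟨a :: k, r, rfl, ?_, hr⟩
      simpa using ⟨ha, hk⟩
    · refine ⟨[], a :: t, rfl, by simp, fun u hu => ?_, List.pairwise_cons.mpr hpair⟩
      obtain ⟨mu, -, hu'⟩ := hmem u hu
      refine ⟨mu, ?_, hu'⟩
      have hau : a.length ≤ u.length := by
        rcases List.mem_cons.mp hu with rfl | hu
        exacts [le_rfl, hpair.1 u hu]
      rw [ha.2, hu'.2] at hau
      omega

end IsLazardFactorization

end LazardSequence

section Factorization

variable {A : Type*} {C : Set (FreeMonoid A)}

theorem exists_isLazardFactorization (hC : ∀ c ∈ C, c ≠ 1) {n : ℕ} (hn : 1 ≤ n) {w : FreeMonoid A}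
    (hw : w ∈ Submonoid.closure (lazardZ C n)) :
    ∃ l, IsLazardFactorization C n l ∧ l.prod = w := by
  by_cases hlt : w.length < n
  · exact ⟨[], by simp [IsLazardFactorization], (eq_one_of_mem_closure_lazardZ hC hn hw hlt).symm⟩
  obtain ⟨k, hk, z, hz, rfl⟩ := exists_prod_mul_of_mem_closure (Q := lazardQ C n) hw
  rw [← lazardZ_succ hn] at hz
  -- needed by the termination proof
  have hzw : z.length ≤ (k.prod * z).length := by simp [FreeMonoid.length_mul]
  obtain ⟨l, hl, rfl⟩ := exists_isLazardFactorization (n := n + 1) hC (Nat.le_succ_of_le hn) hz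
  exact ⟨k ++ l, hl.append hk, List.prod_append⟩
termination_by w.length + 1 - n

theorem IsLazardFactorization.eq (hC : IsCode C) {n : ℕ} (hn : 1 ≤ n) {l l' : List (FreeMonoid A)}
    (hl : IsLazardFactorization C n l) (hl' : IsLazardFactorization C n l')
    (h : l.prod = l'.prod) : l = l' := by
  by_cases hlt : l.prod.length < n
  · rw [hl.eq_nil_of_length_prod_lt hlt, hl'.eq_nil_of_length_prod_lt (h ▸ hlt)]
  obtain ⟨k, r, rfl, hk, hr⟩ := hl.exists_append
  obtain ⟨k', r', rfl, hk', hr'⟩ := hl'.exists_append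
  obtain ⟨rfl, hrr'⟩ :=
    (isCode_lazardZ hC hn).eq_and_eq_of_prod_mul_eq lazardQ_subset_lazardZ hk hk'
      (lazardZ_succ hn ▸ hr.prod_mem_closure (Nat.le_succ_of_le hn))
      (lazardZ_succ hn ▸ hr'.prod_mem_closure (Nat.le_succ_of_le hn))
      (by simpa only [List.prod_append] using h)
  -- needed by the termination proof
  have hrl : r.prod.length ≤ (k ++ r).prod.length := by
    simp [List.prod_append, FreeMonoid.length_mul]
  rw [hr.eq (n := n + 1) hC (Nat.le_succ_of_le hn) hr' hrr']
termination_by l.prod.length + 1 - n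

end Factorization

/-- The sequence `(Q_n)` is the right length factorization of `C*`: every
`w ∈ C*` factors uniquely as a product of elements of `⋃ₙ Qₙ` with weakly
increasing lengths. -/
theorem right_length_factorization {A : Type*} (C : Set (FreeMonoid A))
    (hC : IsCode C) (w : FreeMonoid A) (hw : w ∈ Submonoid.closure C) :
    ∃! l : List (FreeMonoid A),
      (∀ u ∈ l, ∃ n, 1 ≤ n ∧ u ∈ lazardQ C n) ∧
      (l.map FreeMonoid.length).Chain' (· ≤ ·) ∧
      l.prod = w := by
  have sorted_iff {l : List (FreeMonoid A)} :
      (l.map FreeMonoid.length).IsChain (· ≤ ·) ↔ l.Pairwise (fun u v => u.length ≤ v.length) :=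
    List.isChain_iff_pairwise.trans List.pairwise_map
  obtain ⟨l, hl, rfl⟩ := exists_isLazardFactorization hC.1 le_rfl hw
  refine ⟨l, ⟨hl.1, sorted_iff.mpr hl.2, rfl⟩, fun l' ⟨hl'Q, hl'sorted, hl'prod⟩ => ?_⟩
  exact IsLazardFactorization.eq hC le_rfl ⟨hl'Q, sorted_iff.mp hl'sorted⟩ hl hl'prod
end

section
/- Let C be a code over an alphabet A, and let Z_n, Q_n (n ≥ 1) be defined by the Lazard right length recurrence. Let w ∈ Q_n for some n, with w ∉ C. Then there exist nonempty words w_1, w_2 ∈ C* such that w = w_1·w_2 and |w_2| < |w_1| < |w|. Furthermore, w_1 and w_2 can be chosen such that if w_1 ∉ C, then there exist nonempty words w_1', w_1'' ∈ C* with w_1 = w_1'·w_1'' and |w_1''| ≤ |w_2|. -/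
/-- Split off the last generator factor of a nontrivial element of a closure. -/
lemma closure_split {M : Type*} [Monoid M] (s : Set M) (x : M)
    (hx : x ∈ Submonoid.closure s) (hx1 : x ≠ 1) :
    ∃ y q, y ∈ Submonoid.closure s ∧ q ∈ s ∧ x = y * q := by
  obtain ⟨l, hl, hprod⟩ := Submonoid.exists_list_of_mem_closure hx
  rcases l.eq_nil_or_concat with rfl | ⟨L, b, rfl⟩
  · simp at hprod; exact absurd hprod.symm hx1
  · refine ⟨L.prod, b, ?_, hl b (by simp), ?_⟩
    · exact list_prod_mem (fun y hy => Submonoid.subset_closure (hl y (by simp [hy])))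
    · rw [← hprod, List.concat_eq_append, List.prod_append, List.prod_singleton]

lemma lazardZ_subset_closure {A : Type*} (C : Set (FreeMonoid A)) :
    ∀ m, lazardZ C m ⊆ Submonoid.closure C := by
  intro m
  induction m with
  | zero => simp [lazardZ]
  | succ n ih =>
    match n with
    | 0 => exact Submonoid.subset_closure
    | k + 1 =>
      rintro w ⟨z, hz, -, u, hu, rfl⟩
      refine mul_mem (ih hz) ?_
      have : ({v | v ∈ lazardZ C (k + 1) ∧ v.length = k + 1} : Set (FreeMonoid A))
          ⊆ Submonoid.closure C := fun v hv => ih hv.1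
      exact (Submonoid.closure_le.2 this) hu

lemma lazardZ_length {A : Type*} (C : Set (FreeMonoid A)) (hC1 : ∀ c ∈ C, c ≠ 1) :
    ∀ m, ∀ w ∈ lazardZ C m, m ≤ w.length := by
  intro m
  induction m with
  | zero => simp
  | succ n ih =>
    match n with
    | 0 =>
      intro w hw
      have : w ≠ 1 := hC1 w hw
      have : w.length ≠ 0 := fun h => this (FreeMonoid.length_eq_zero.1 h)
      omega
    | k + 1 =>
      rintro w ⟨z, hz, hzl, u, hu, rfl⟩
      have h1 : k + 1 ≤ z.length := ih z hz
      have h2 : k + 2 ≤ z.length := by omega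
      rw [FreeMonoid.length_mul]
      omega

lemma lazard_key {A : Type*} (C : Set (FreeMonoid A)) (hC1 : ∀ c ∈ C, c ≠ 1) :
    ∀ m, ∀ w ∈ lazardZ C m, w ∉ C →
    ∃ z q : FreeMonoid A, z ∈ Submonoid.closure C ∧ q ∈ Submonoid.closure C ∧
      z ≠ 1 ∧ q ≠ 1 ∧ w = z * q ∧ q.length < z.length ∧ q.length ≤ m - 1 ∧
      (z ∉ C → ∃ z' z'' : FreeMonoid A, z' ∈ Submonoid.closure C ∧
        z'' ∈ Submonoid.closure C ∧ z' ≠ 1 ∧ z'' ≠ 1 ∧ z = z' * z'' ∧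
        z''.length ≤ q.length) := by
  intro m
  induction m with
  | zero => simp [lazardZ]
  | succ n ih =>
    match n with
    | 0 => intro w hw hwC; exact absurd hw hwC
    | k + 1 =>
      rintro w ⟨z, hz, hzl, u, hu, rfl⟩ hwC
      set Q : Set (FreeMonoid A) :=
        {v | v ∈ lazardZ C (k + 1) ∧ v.length = k + 1} with hQ
      have hQC : Q ⊆ Submonoid.closure C := fun v hv =>
        lazardZ_subset_closure C (k + 1) hv.1
      have hQcl : Submonoid.closure Q ≤ Submonoid.closure C :=
        Submonoid.closure_le.2 hQC
      have hzlen : k + 2 ≤ z.length := by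
        have := lazardZ_length C hC1 (k + 1) z hz; omega
      have hz1 : z ≠ 1 := by
        intro h; rw [h] at hzlen; simp [FreeMonoid.length_one] at hzlen
      rcases eq_or_ne u 1 with rfl | hu1
      · -- w = z ∈ Z_{k+1}
        rw [mul_one] at hwC ⊢
        obtain ⟨z', q', h1, h2, h3, h4, h5, h6, h7, h8⟩ := ih z hz hwC
        exact ⟨z', q', h1, h2, h3, h4, h5, h6, by omega, h8⟩
      · obtain ⟨u', q, hu', hqQ, rfl⟩ := closure_split Q u hu hu1
        have hqlen : q.length = k + 1 := hqQ.2
        have hq1 : q ≠ 1 := by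
          intro h; rw [h, FreeMonoid.length_one] at hqlen; omega
        have hu'C : u' ∈ Submonoid.closure C := hQcl hu'
        refine ⟨z * u', q, mul_mem (lazardZ_subset_closure C (k + 1) hz) hu'C,
          hQC hqQ, ?_, hq1, by rw [mul_assoc], ?_, by omega, ?_⟩
        · intro h
          have := congrArg FreeMonoid.length h
          rw [FreeMonoid.length_mul, FreeMonoid.length_one] at this
          omega
        · rw [FreeMonoid.length_mul]; omega
        · intro hzuC
          rcases eq_or_ne u' 1 with rfl | hu'1
          · rw [mul_one] at hzuC ⊢
            obtain ⟨z', z'', h1, h2, h3, h4, h5, h6, h7, -⟩ := ih z hz hzuC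
            exact ⟨z', z'', h1, h2, h3, h4, h5, by omega⟩
          · obtain ⟨u'', q', hu'', hq'Q, rfl⟩ := closure_split Q u' hu' hu'1
            have hq'len : q'.length = k + 1 := hq'Q.2
            refine ⟨z * u'', q',
              mul_mem (lazardZ_subset_closure C (k + 1) hz) (hQcl hu''),
              hQC hq'Q, ?_, ?_, by rw [mul_assoc], by omega⟩
            · intro h
              have := congrArg FreeMonoid.length h
              rw [FreeMonoid.length_mul, FreeMonoid.length_one] at this
              omega
            · intro h; rw [h, FreeMonoid.length_one] at hq'len; omega

/-- Standard bracketing decomposition: an element of some `Q_n` which is not in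
`C` splits as `w = w₁w₂` with `w₁, w₂ ∈ C*` nonempty and `|w₂| < |w₁| < |w|`;
moreover `w₁, w₂` can be chosen so that if `w₁ ∉ C`, then `w₁ = w₁'w₁''` with
`w₁', w₁'' ∈ C*` nonempty and `|w₁''| ≤ |w₂|`. -/
theorem lazardQ_bracketing {A : Type*} (C : Set (FreeMonoid A)) (hC : IsCode C)
    (n : ℕ) (hn : 1 ≤ n) (w : FreeMonoid A) (hw : w ∈ lazardQ C n) (hwC : w ∉ C) :
    ∃ w₁ w₂ : FreeMonoid A,
      w₁ ∈ Submonoid.closure C ∧ w₂ ∈ Submonoid.closure C ∧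
      w₁ ≠ 1 ∧ w₂ ≠ 1 ∧ w = w₁ * w₂ ∧
      w₂.length < w₁.length ∧ w₁.length < w.length ∧
      (w₁ ∉ C →
        ∃ w₁' w₁'' : FreeMonoid A,
          w₁' ∈ Submonoid.closure C ∧ w₁'' ∈ Submonoid.closure C ∧
          w₁' ≠ 1 ∧ w₁'' ≠ 1 ∧ w₁ = w₁' * w₁'' ∧ w₁''.length ≤ w₂.length) := by
  obtain ⟨z, q, h1, h2, h3, h4, h5, h6, -, h8⟩ :=
    lazard_key C hC.1 n w hw.1 hwC
  have hq0 : q.length ≠ 0 := fun h => h4 (FreeMonoid.length_eq_zero.1 h)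
  refine ⟨z, q, h1, h2, h3, h4, h5, h6, ?_, h8⟩
  rw [h5, FreeMonoid.length_mul]
  omega
end

section
/- For all integers n ≥ 1 and k ≥ 1, the following identity holds in ℚ: Σ_{p=1}^{k} ((−1)^{p+1}/p) · Σ ∏_{m=1}^{p} (binom(n·i_m, i_m)/((n−1)·i_m + 1)) = binom(nk, k)/(nk), where the inner sum ranges over all compositions (i_1, …, i_p) of k into p positive parts (i_m ≥ 1, i_1 + ⋯ + i_p = k). -/
/-!
Let `A = ∑ aᵢ Xⁱ` be the Fuss–Catalan series, `aᵢ = binom(n i, i) / ((n - 1) i + 1)`. The inner sum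
is the `k`-th coefficient of `(A - 1)ᵖ`, so the left-hand side is the `k`-th coefficient of
`log A = log (1 + (A - 1))`. As `A(0) = 1`, `log A` is the only series `L` with `L(0) = 0` and
`L' A = A'`. For `L = ∑_{k ≥ 1} binom(n k, k) / (n k) Xᵏ` this comes down to the convolution
`∑_{i + j = k} aᵢ binom(n j, j) = binom(n k + 1, k)`, the case `x = 1` of the Rothe–Hagen identity
`∑_{i + j = k} Rₓ(i) binom(n j, j) = binom(x + n k, k)` for the Raney numbers
`Rₓ(i) = x / (x + n i) · binom(x + n i, i)`. In `x`, both sides satisfy `Fₓ₊₁ = Fₓ + X Fₓ₊ₙ`,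
a recursion which determines them from their value at `x = 0`.
-/

open PowerSeries

namespace Composition

open Finset

def cons {k i : ℕ} (hi : i ∈ Icc 1 k) (c : Composition (k - i)) : Composition k where
  blocks := i :: c.blocks
  blocks_pos hb := by
    rcases List.mem_cons.mp hb with rfl | hb
    · exact (mem_Icc.mp hi).1
    · exact c.blocks_pos hb
  blocks_sum := by rw [List.sum_cons, c.blocks_sum]; have := mem_Icc.mp hi; omega

def tail {k : ℕ} (c : Composition k) : Composition (k - c.blocks.headI) where
  blocks := c.blocks.tail
  blocks_pos hb := c.blocks_pos (List.mem_of_mem_tail hb)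
  blocks_sum := by rw [List.tail_sum, c.blocks_sum]

theorem sum_filter_length_succ {M : Type*} [AddCommMonoid M] (h : List ℕ → M) (k p : ℕ) :
    ∑ c ∈ univ.filter (fun c : Composition k => c.length = p + 1), h c.blocks =
      ∑ i ∈ Icc 1 k, ∑ c ∈ univ.filter (fun c : Composition (k - i) => c.length = p),
        h (i :: c.blocks) := by
  rw [sum_sigma']
  refine sum_bij' (fun c _ => ⟨c.blocks.headI, c.tail⟩)
    (fun x hx => cons (mem_sigma.mp hx).1 x.2) ?_ ?_ ?_ (fun _ _ => rfl) ?_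
  all_goals simp only [mem_filter, mem_univ, true_and, mem_sigma]
  · rintro ⟨_ | ⟨b, l⟩, hpos, hsum⟩ hc
    · simp at hc
    · refine ⟨mem_Icc.mpr ⟨hpos (by simp), ?_⟩, by simpa [Composition.length, tail] using hc⟩
      simp only [List.sum_cons] at hsum
      simp only [List.headI_cons]
      omega
  · rintro ⟨i, c⟩ ⟨-, hc⟩
    simpa [Composition.length, cons] using hc
  · rintro ⟨_ | ⟨b, l⟩, hpos, hsum⟩ hc
    · simp at hc
    · rfl
  · rintro ⟨_ | ⟨b, l⟩, hpos, hsum⟩ hc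
    · simp at hc
    · rfl

end Composition

namespace PowerSeries

open Finset

theorem coeff_pow_eq_sum_compositions {R : Type*} [CommSemiring R] {g : R⟦X⟧}
    (hg : constantCoeff g = 0) (p k : ℕ) :
    coeff k (g ^ p) = ∑ c ∈ univ.filter (fun c : Composition k => c.length = p),
      (c.blocks.map fun i => coeff i g).prod := by
  induction p generalizing k with
  | zero =>
    rcases k.eq_zero_or_pos with rfl | hk
    · rw [sum_eq_single_of_mem (Composition.ones 0) (by simp)
        fun c _ hc => (hc (Composition.ext (by simp [Composition.blocks_eq_nil]))).elim]
      simp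
    · rw [filter_false_of_mem fun c _ => (c.length_pos_iff.mpr hk).ne']
      simp [coeff_one, hk.ne']
  | succ p ih =>
    rw [Composition.sum_filter_length_succ (fun l => (l.map fun i => coeff i g).prod), pow_succ',
      coeff_mul, Nat.sum_antidiagonal_eq_sum_range_succ_mk]
    refine (sum_subset (fun i hi => ?_) (fun i hi hi' => ?_)).symm.trans
      (sum_congr rfl fun i _ => ?_)
    · simp at hi ⊢
      omega
    · obtain rfl : i = 0 := by simp at hi hi'; omega
      simp [hg]
    · simp [ih, mul_sum]

section Log

variable {A : Type*} [CommRing A] [Algebra ℚ A] {f : A⟦X⟧}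

theorem coeff_logOf_eq_sum (hf : constantCoeff f = 1) (k : ℕ) :
    coeff k (logOf f) =
      ∑ p ∈ Icc 1 k, algebraMap ℚ A ((-1) ^ (p + 1) / p) * coeff k ((f - 1) ^ p) := by
  have hf₁ : constantCoeff (f - 1) = 0 := by simp [hf]
  rw [logOf_eq, coeff_subst' (.of_constantCoeff_zero' hf₁), finsum_eq_sum_of_support_subset _ ?_]
  · refine sum_congr rfl fun p hp => ?_
    rw [coeff_log, if_neg (by simp at hp; omega), smul_eq_mul]
  · intro p hp
    by_contra hpk
    refine hp ?_
    rcases Nat.eq_zero_or_pos p with rfl | hp₀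
    · simp
    · have hX : X ^ p ∣ (f - 1) ^ p := pow_dvd_pow_of_dvd (X_dvd_iff.mpr hf₁) p
      dsimp only
      rw [X_pow_dvd_iff.mp hX k (by simp at hpk; omega), smul_zero]

theorem derivative_logOf_mul (hf : constantCoeff f = 1) :
    d⁄dX A (logOf f) * f = d⁄dX A f := by
  have hs : HasSubst (f - 1) := .of_constantCoeff_zero' (by simp [hf])
  have hgeom : d⁄dX A (log A) * (1 + X) = 1 := by
    ext n
    cases n <;> simp [deriv_log, mul_add, coeff_succ_mul_X, pow_succ]
  have hinv : (d⁄dX A (log A)).subst (f - 1) * f = 1 := by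
    have := congrArg (subst (f - 1)) hgeom
    rwa [← coe_substAlgHom hs, map_mul, map_add, map_one, coe_substAlgHom, subst_X hs,
      add_sub_cancel] at this
  rw [logOf_eq, derivative_subst hs, map_sub, derivative_one, sub_zero, mul_right_comm, hinv,
    one_mul]

theorem eq_logOf_of_derivative_mul {L : A⟦X⟧} (hf : constantCoeff f = 1)
    (hL : constantCoeff L = 0) (h : d⁄dX A L * f = d⁄dX A f) : L = logOf f := by
  have := IsAddTorsionFree.of_module_rat A
  have hu : IsUnit f := isUnit_iff_constantCoeff.mpr (by simp [hf])
  refine derivative.ext (hu.mul_left_injective ?_) (by rw [hL, constantCoeff_logOf hf])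
  change _ * f = _ * f
  rw [h, derivative_logOf_mul hf]

end Log

theorem eq_zero_of_succ_eq_add_X_mul {R : Type*} [Semiring R] {H : ℕ → R⟦X⟧} {m : ℕ}
    (h₀ : H 0 = 0) (hsucc : ∀ x, H (x + 1) = H x + X * H (x + m)) (x : ℕ) : H x = 0 := by
  ext k
  induction k generalizing x with
  | zero =>
    induction x with
    | zero => simp [h₀]
    | succ x ih => rw [hsucc, map_add, ih, coeff_zero_X_mul, add_zero]
  | succ k ihk =>
    induction x with
    | zero => simp [h₀]
    | succ x ih => simp [hsucc, ih, coeff_succ_X_mul, ihk]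

theorem coeff_X_mul_derivative {R : Type*} [CommSemiring R] (f : R⟦X⟧) (k : ℕ) :
    coeff k (X * d⁄dX R f) = k * coeff k f := by
  cases k with
  | zero => simp
  | succ k => rw [coeff_succ_X_mul, coeff_derivative, mul_comm]; push_cast; rfl

end PowerSeries

def fussCatalan (n i : ℕ) : ℚ := (Nat.choose (n * i) i : ℚ) / (((n : ℚ) - 1) * i + 1)

/-- The Raney number `x / (x + n j) · binom(x + n j, j)`, the coefficient of `Xʲ` in the `x`-th
power of the Fuss–Catalan series, written without division so that `raney n 0 0 = 1`. -/
def raney (n x : ℕ) : ℕ → ℚ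
  | 0 => 1
  | j + 1 => (Nat.choose (x + n * (j + 1)) (j + 1) : ℚ) -
      n * (Nat.choose (x + n * (j + 1) - 1) j : ℚ)

section FussCatalan

variable {n : ℕ}

theorem fussCatalan_eq_choose_div (hn : 1 ≤ n) (j : ℕ) :
    fussCatalan n j = (Nat.choose (n * j + 1) j : ℚ) / (n * j + 1) := by
  have hj : j ≤ n * j + 1 := by have := Nat.mul_le_mul_right j hn; omega
  have key : ((n * j : ℕ) + 1 : ℚ) * Nat.choose (n * j) j =
      Nat.choose (n * j + 1) j * ((n * j + 1 - j : ℕ) : ℚ) := by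
    exact_mod_cast (Nat.add_one_mul_choose_eq (n * j) j).trans (Nat.choose_succ_right_eq _ _)
  have hn' : (1 : ℚ) ≤ n := by exact_mod_cast hn
  rw [fussCatalan, div_eq_div_iff (by nlinarith [(j.cast_nonneg : (0 : ℚ) ≤ j)]) (by positivity)]
  push_cast [Nat.cast_sub hj] at key
  linear_combination key

theorem raney_succ_succ (hn : 1 ≤ n) (x j : ℕ) :
    raney n (x + 1) (j + 1) = raney n x (j + 1) + raney n (x + n) j := by
  cases j with
  | zero => simp [raney]
  | succ j =>
    obtain ⟨N, hN⟩ := Nat.exists_eq_add_one.mpr (show 0 < x + n * (j + 1 + 1) by positivity)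
    have hN' : x + n + n * (j + 1) = N + 1 := by rw [← hN]; ring
    simp only [raney, hN, hN', show x + 1 + n * (j + 1 + 1) = N + 1 + 1 by omega,
      Nat.add_sub_cancel, Nat.choose_succ_succ]
    push_cast
    ring

theorem raney_zero_succ (hn : 1 ≤ n) (j : ℕ) : raney n 0 (j + 1) = 0 := by
  obtain ⟨M, hM⟩ := Nat.exists_eq_add_one.mpr (show 0 < n * (j + 1) by positivity)
  have hMq : (M : ℚ) + 1 = n * (j + 1) := by exact_mod_cast hM.symm
  have key : ((M : ℚ) + 1) * Nat.choose M j = Nat.choose (M + 1) (j + 1) * (j + 1) := by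
    exact_mod_cast Nat.add_one_mul_choose_eq M j
  simp only [raney, zero_add, hM, Nat.add_sub_cancel]
  refine mul_right_cancel₀ (b := (j + 1 : ℚ)) (by positivity) ?_
  linear_combination -key + (Nat.choose M j : ℚ) * hMq

theorem raney_one (hn : 1 ≤ n) (j : ℕ) : raney n 1 j = fussCatalan n j := by
  rw [fussCatalan_eq_choose_div hn]
  cases j with
  | zero => simp [raney]
  | succ j =>
    have key : ((n * (j + 1) : ℕ) + 1 : ℚ) * Nat.choose (n * (j + 1)) j =
        Nat.choose (n * (j + 1) + 1) (j + 1) * (j + 1) := by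
      exact_mod_cast Nat.add_one_mul_choose_eq (n * (j + 1)) j
    simp only [raney, add_comm 1, Nat.add_sub_cancel]
    rw [eq_div_iff (by positivity)]
    push_cast at key ⊢
    linear_combination -(n : ℚ) * key

theorem mk_raney_mul_mk_choose (hn : 1 ≤ n) (x : ℕ) :
    mk (raney n x) * (mk fun k => (Nat.choose (n * k) k : ℚ)) =
      mk fun k => (Nat.choose (x + n * k) k : ℚ) := by
  have hraney (x : ℕ) : mk (raney n (x + 1)) = mk (raney n x) + X * mk (raney n (x + n)) := by
    ext j
    cases j with
    | zero => simp [raney]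
    | succ j => simp [coeff_succ_X_mul, raney_succ_succ hn]
  have hchoose (x : ℕ) : (mk fun k => (Nat.choose (x + 1 + n * k) k : ℚ)) =
      (mk fun k => (Nat.choose (x + n * k) k : ℚ)) +
        X * mk fun k => (Nat.choose (x + n + n * k) k : ℚ) := by
    ext k
    cases k with
    | zero => simp
    | succ k =>
      simp only [map_add, coeff_mk, coeff_succ_X_mul]
      rw [show x + 1 + n * (k + 1) = x + n * (k + 1) + 1 by ring, Nat.choose_succ_succ',
        show x + n + n * k = x + n * (k + 1) by ring]
      push_cast
      ring
  refine sub_eq_zero.mp (eq_zero_of_succ_eq_add_X_mul (m := n)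
    (H := fun x => mk (raney n x) * (mk fun k => (Nat.choose (n * k) k : ℚ)) -
      mk fun k => (Nat.choose (x + n * k) k : ℚ)) ?_ (fun x => ?_) x)
  · have h₀ : mk (raney n 0) = 1 := by
      ext j
      cases j with
      | zero => simp [raney]
      | succ j => simp [raney_zero_succ hn]
    simp [h₀]
  · simp only [hraney, hchoose]
    rw [add_mul, mul_sub, mul_assoc]
    abel

theorem mk_fussCatalan_mul_mk_choose (hn : 1 ≤ n) :
    mk (fussCatalan n) * (mk fun k => (Nat.choose (n * k) k : ℚ)) =
      mk fun k => (Nat.choose (n * k + 1) k : ℚ) := by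
  rw [show fussCatalan n = raney n 1 from funext fun j => (raney_one hn j).symm,
    mk_raney_mul_mk_choose hn]
  simp_rw [add_comm 1]

/-- The constant coefficient of the right-hand side is `binom(0, 0) / 0 = 0`. -/
theorem logOf_mk_fussCatalan (hn : 1 ≤ n) :
    logOf (mk (fussCatalan n)) = mk fun k => (Nat.choose (n * k) k : ℚ) / (n * k) := by
  refine (eq_logOf_of_derivative_mul (by simp [fussCatalan]) (by simp) ?_).symm
  have hn' : (n : ℚ) ≠ 0 := by positivity
  have hL : C (n : ℚ) * (X * d⁄dX ℚ (mk fun k => (Nat.choose (n * k) k : ℚ) / (n * k))) =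
      (mk fun k => (Nat.choose (n * k) k : ℚ)) - 1 := by
    ext k
    rcases Nat.eq_zero_or_pos k with rfl | hk
    · simp
    · simp only [coeff_C_mul, coeff_X_mul_derivative, map_sub, coeff_mk, coeff_one, if_neg hk.ne']
      field_simp
      ring
  have hA : C (n : ℚ) * (X * d⁄dX ℚ (mk (fussCatalan n))) =
      mk (fussCatalan n) * (mk fun k => (Nat.choose (n * k) k : ℚ)) - mk (fussCatalan n) := by
    rw [mk_fussCatalan_mul_mk_choose hn]
    ext k
    simp only [coeff_C_mul, coeff_X_mul_derivative, map_sub, coeff_mk, fussCatalan_eq_choose_div hn]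
    field_simp
    ring
  refine mul_left_cancel₀ (a := C (n : ℚ) * X)
    (mul_ne_zero ((map_ne_zero_iff C C_injective).mpr hn') X_ne_zero) ?_
  linear_combination mk (fussCatalan n) * hL - hA

end FussCatalan

theorem fuss_catalan_log_identity_general (n k : ℕ) (hn : 1 ≤ n) :
    ∑ p ∈ Finset.Icc 1 k, ((-1 : ℚ) ^ (p + 1) / p) *
      ∑ c ∈ Finset.univ.filter (fun c : Composition k => c.length = p),
        (c.blocks.map
          (fun i => (Nat.choose (n * i) i : ℚ) / (((n : ℚ) - 1) * i + 1))).prod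
    = (Nat.choose (n * k) k : ℚ) / (n * k) := by
  have hA : constantCoeff (mk (fussCatalan n)) = 1 := by simp [fussCatalan]
  have hblocks (c : Composition k) :
      c.blocks.map (fun i => coeff i (mk (fussCatalan n) - 1)) = c.blocks.map (fussCatalan n) :=
    List.map_congr_left fun i hi => by simp [coeff_one, (c.blocks_pos hi).ne']
  calc _ = coeff k (logOf (mk (fussCatalan n))) := by
        rw [coeff_logOf_eq_sum hA]
        refine Finset.sum_congr rfl fun p _ => ?_
        rw [coeff_pow_eq_sum_compositions (by simp [hA])]
        simp only [hblocks, Algebra.algebraMap_self_apply]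
        rfl
    _ = _ := by rw [logOf_mk_fussCatalan hn, coeff_mk]

/-- The identity `Σ_{p=1}^{k} ((−1)^{p+1}/p) Σ_{i₁+⋯+i_p=k} ∏_m
binom(n·i_m, i_m)/((n−1)i_m+1) = binom(nk,k)/(nk)`, where the inner sum is over
compositions of `k` into `p` positive parts. -/
theorem fuss_catalan_log_identity (n k : ℕ) (hn : 1 ≤ n) (hk : 1 ≤ k) :
    ∑ p ∈ Finset.Icc 1 k, ((-1 : ℚ) ^ (p + 1) / p) *
      ∑ c ∈ Finset.univ.filter (fun c : Composition k => c.length = p),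
        (c.blocks.map
          (fun i => (Nat.choose (n * i) i : ℚ) / (((n : ℚ) - 1) * i + 1))).prod
    = (Nat.choose (n * k) k : ℚ) / (n * k) :=
  fuss_catalan_log_identity_general n k hn
end

section
/- Let C(t) = Σ_{k≥0} catalan(k) t^k ∈ ℚ[[t]] be the generating series of the Catalan numbers. Then 2·t·C′ = C · Σ_{j≥1} binom(2j, j) t^j in ℚ[[t]], where C′ is the formal derivative of C. (Equivalently, C is the image under the map e of the Witt vector *2!/2!, whose ghost components are binom(2p,p)/2; this is the content of the closed form e(*2!/2!) = ((1+√(1−4t))/2)^{-1}.) -/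
open PowerSeries

/-- The Catalan generating series `C = Σ_k catalan(k) t^k` satisfies
`2·t·C′ = C · Σ_{j≥1} binom(2j,j) t^j`, i.e. it is the image under `e` of the
Witt vector `*2!/2!`, whose ghost components are `binom(2p,p)/2`. -/
theorem catalan_series_log_derivative :
    (2 : ℚ⟦X⟧) * X * (d⁄dX ℚ (PowerSeries.mk fun k => (catalan k : ℚ))) =
      (PowerSeries.mk fun k => (catalan k : ℚ)) *
        (PowerSeries.mk fun j => if j = 0 then 0 else (Nat.choose (2 * j) j : ℚ)) := by
  set C : ℚ⟦X⟧ := PowerSeries.mk fun k => (catalan k : ℚ) with hCdef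
  set D : ℚ⟦X⟧ := d⁄dX ℚ C with hDdef
  have hC : C = 1 + X * C ^ 2 := by
    ext n
    cases n with
    | zero => simp [hCdef]
    | succ n =>
      rw [map_add, coeff_succ_X_mul, sq, coeff_mul]
      simp [hCdef, catalan_succ', Nat.cast_sum]
  have hD : D = C ^ 2 + 2 * X * C * D := by
    have hC2 : C = 1 + X * (C * C) := hC.trans (by ring)
    have := congrArg (d⁄dX ℚ) hC2
    simp only [map_add, Derivation.map_one_eq_zero, Derivation.leibniz, derivative_X,
      smul_eq_mul, zero_add] at this
    rw [hDdef]
    linear_combination this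
  have hB : (PowerSeries.mk fun j => if j = 0 then 0 else (Nat.choose (2 * j) j : ℚ))
      = C + X * D - 1 := by
    ext n
    cases n with
    | zero => simp [hCdef]
    | succ n =>
      rw [map_sub, map_add, coeff_succ_X_mul, hDdef, coeff_derivative]
      have h1 : (n + 1 : ℚ) ≠ 0 := by positivity
      have h2 : (2 * (n+1)).choose (n+1) = (n + 2) * catalan (n+1) := by
        have := (succ_mul_catalan_eq_centralBinom (n+1)).symm
        simpa [Nat.centralBinom] using this
      simp [hCdef, coeff_one, h2]
      ring
  rw [hB]
  linear_combination (-(2*X*D + C)) * hC + (X*C) * hD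
end

section
/- For an integer n ≥ 1, let E = Σ_{k≥0} (binom(n(k+1), k+1)/((n−1)(k+1)+1)) X^k ∈ ℚ[[X]] (the shifted Fuss–Catalan series, so that 1 + X·E equals the Fuss–Catalan series F = Σ_{k≥0} binom(nk,k)/((n−1)k+1) X^k). Then X·E′ = E · Σ_{j≥1} binom(nj, j) X^j in ℚ[[X]], where E′ is the formal derivative of E. (Equivalently, E = e(*binom(n,1)) = (e((1/n)*binom(n,1)) − 1)/X, where the ghost components of *binom(n,1) are binom(nj,j).) -/
open PowerSeries
open Finset

def Aq (n a i : ℕ) : ℚ :=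
  (Nat.choose (n * i + a) i : ℚ) -
    n * (if i = 0 then 0 else (Nat.choose (n * i + a - 1) (i - 1) : ℚ))

lemma Aq_zero (n a : ℕ) : Aq n a 0 = 1 := by simp [Aq]

lemma Aq_rec (n a i : ℕ) (hn : 1 ≤ n) :
    Aq n (a + 1) (i + 1) = Aq n a (i + 1) + Aq n (a + n) i := by
  cases i with
  | zero =>
    have h2 : n * 1 + (a + 1) - 1 = n * 1 + a := by omega
    have h3 : Aq n (a + n) 0 = 1 := Aq_zero n (a + n)
    simp only [Aq, h3, h2, if_neg Nat.one_ne_zero, Nat.sub_self, Nat.choose_one_right,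
      Nat.choose_zero_right, Nat.cast_one, mul_one]
    rw [Nat.choose_one_right, Nat.choose_one_right]
    push_cast
    ring
  | succ j =>
    obtain ⟨P, hP⟩ : ∃ P, n * (j + 1) + (a + n) = P + 1 := by
      refine ⟨n * (j + 1) + (a + n) - 1, by omega⟩
    have hm : n * (j + 1 + 1) = n * (j + 1) + n := by ring
    have e1 : n * (j + 1 + 1) + (a + 1) = P + 2 := by rw [hm]; omega
    have e2 : n * (j + 1 + 1) + a = P + 1 := by rw [hm]; omega
    simp only [Aq, if_neg (Nat.succ_ne_zero _), e1, e2, hP, Nat.add_sub_cancel,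
      Nat.succ_sub_one]
    have p1 : Nat.choose (P + 2) (j + 2) = Nat.choose (P+1) (j+1) + Nat.choose (P+1) (j+2) :=
      Nat.choose_succ_succ' (P+1) (j+1)
    have p2 : Nat.choose (P + 1) (j + 1) = Nat.choose P j + Nat.choose P (j+1) :=
      Nat.choose_succ_succ' P j
    push_cast [p1, p2]
    ring

def Sq (n a m : ℕ) : ℚ :=
  ∑ i ∈ range (m + 1), Aq n a i * (Nat.choose (n * (m - i)) (m - i) : ℚ)

lemma Aq_a_zero (n i : ℕ) (hn : 1 ≤ n) : Aq n 0 (i + 1) = 0 := by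
  obtain ⟨M, hM⟩ : ∃ M, n * (i + 1) = M + 1 := by
    refine ⟨n * (i + 1) - 1, ?_⟩
    have : 1 ≤ n * (i + 1) := Nat.one_le_iff_ne_zero.2 (by positivity)
    omega
  have h := Nat.add_one_mul_choose_eq M i
  simp only [Aq, if_neg (Nat.succ_ne_zero i), Nat.add_zero, hM, Nat.add_sub_cancel,
    Nat.succ_sub_one]
  have h2 : ((M + 1 : ℕ) : ℚ) * (Nat.choose M i : ℚ) = (Nat.choose (M+1) (i+1) : ℚ) * (i+1) := by
    exact_mod_cast congrArg (Nat.cast : ℕ → ℚ) h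
  have hM' : ((n : ℚ) * (i + 1)) = (M:ℚ) + 1 := by exact_mod_cast congrArg (Nat.cast : ℕ → ℚ) hM
  push_cast at h2 ⊢
  have hi : ((i:ℚ) + 1) ≠ 0 := by positivity
  nlinarith [h2, hM']

lemma Sq_expand (n b M : ℕ) : Sq n b (M + 1) =
    (∑ i ∈ range (M + 1), Aq n b (i + 1) * (Nat.choose (n * (M - i)) (M - i) : ℚ))
      + (Nat.choose (n * (M + 1)) (M + 1) : ℚ) := by
  rw [Sq, Finset.sum_range_succ']
  simp only [Nat.succ_sub_succ, Nat.sub_zero, Aq_zero, one_mul]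

lemma Sq_eq (n : ℕ) (hn : 1 ≤ n) : ∀ m a, Sq n a m = (Nat.choose (n * m + a) m : ℚ) := by
  intro m
  induction m with
  | zero => intro a; simp [Sq, Aq_zero]
  | succ M ih =>
    intro a
    induction a with
    | zero =>
      rw [Sq, Finset.sum_eq_single_of_mem 0 (Finset.mem_range.2 (Nat.succ_pos _))]
      · simp [Aq_zero]
      · intro i _ hi
        obtain ⟨j, rfl⟩ := Nat.exists_eq_succ_of_ne_zero hi
        rw [Aq_a_zero n j hn, zero_mul]
    | succ a iha =>
      have step : Sq n (a + 1) (M + 1) = Sq n a (M + 1) + Sq n (a + n) M := by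
        rw [Sq_expand, Sq_expand]
        have : ∀ i ∈ range (M + 1),
            Aq n (a+1) (i+1) * (Nat.choose (n * (M - i)) (M - i) : ℚ)
            = Aq n a (i+1) * (Nat.choose (n * (M - i)) (M - i) : ℚ)
              + Aq n (a+n) i * (Nat.choose (n * (M - i)) (M - i) : ℚ) := by
          intro i _
          rw [Aq_rec n a i hn, add_mul]
        rw [Finset.sum_congr rfl this, Finset.sum_add_distrib, Sq]
        ring
      rw [step, iha, ih (a + n)]
      have p : Nat.choose (n * (M+1) + a + 1) (M + 1)
          = Nat.choose (n * (M+1) + a) M + Nat.choose (n * (M+1) + a) (M+1) :=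
        Nat.choose_succ_succ' _ _
      have e : n * M + (a + n) = n * (M + 1) + a := by ring
      have e2 : n * (M+1) + (a+1) = n * (M+1) + a + 1 := by ring
      rw [e, e2, p]
      push_cast
      ring

lemma Aq_one (n j : ℕ) (hn : 1 ≤ n) :
    (Nat.choose (n * (j + 1)) (j + 1) : ℚ) / (((n : ℚ) - 1) * ((j : ℚ) + 1) + 1)
      = Aq n 1 (j + 1) := by
  have hN : j ≤ n * (j + 1) := by nlinarith
  have hd : ((n : ℚ) - 1) * ((j : ℚ) + 1) + 1 ≠ 0 := by
    have h1 : (1 : ℚ) ≤ (n : ℚ) := by exact_mod_cast hn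
    have h2 : (0 : ℚ) ≤ (j : ℚ) := by positivity
    nlinarith
  rw [div_eq_iff hd]
  have h1 := Nat.choose_succ_succ' (n * (j + 1)) j
  have h2 := Nat.choose_succ_right_eq (n * (j + 1)) j
  have h1q : (Nat.choose (n * (j+1) + 1) (j+1) : ℚ)
      = (Nat.choose (n*(j+1)) j : ℚ) + (Nat.choose (n*(j+1)) (j+1) : ℚ) := by
    exact_mod_cast congrArg (Nat.cast : ℕ → ℚ) h1
  have h2q : (Nat.choose (n*(j+1)) (j+1) : ℚ) * ((j:ℚ) + 1)
      = (Nat.choose (n*(j+1)) j : ℚ) * ((n:ℚ) * ((j:ℚ)+1) - j) := by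
    have := congrArg (Nat.cast : ℕ → ℚ) h2
    push_cast [Nat.cast_sub hN] at this
    push_cast
    linarith [this]
  simp only [Aq, if_neg (Nat.succ_ne_zero j), Nat.add_sub_cancel, Nat.succ_sub_one]
  linear_combination (-(((n : ℚ) - 1) * ((j : ℚ) + 1) + 1)) * h1q + (1 - (n:ℚ)) * h2q

lemma Aq_one_mul (n j : ℕ) (hn : 1 ≤ n) :
    ((j : ℚ) + 1) * Aq n 1 (j + 1) + (Nat.choose (n * (j + 1)) (j + 1) : ℚ)
      = (Nat.choose (n * (j + 1) + 1) (j + 1) : ℚ) := by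
  have h1 := Nat.choose_succ_succ' (n * (j + 1)) j
  have h3 := Nat.add_one_mul_choose_eq (n * (j + 1)) j
  have h1q : (Nat.choose (n * (j+1) + 1) (j+1) : ℚ)
      = (Nat.choose (n*(j+1)) j : ℚ) + (Nat.choose (n*(j+1)) (j+1) : ℚ) := by
    exact_mod_cast congrArg (Nat.cast : ℕ → ℚ) h1
  have h3q : ((n:ℚ) * ((j:ℚ)+1) + 1) * (Nat.choose (n*(j+1)) j : ℚ)
      = (Nat.choose (n*(j+1)+1) (j+1) : ℚ) * ((j:ℚ)+1) := by
    have := congrArg (Nat.cast : ℕ → ℚ) h3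
    push_cast at this
    push_cast
    linarith [this]
  simp only [Aq, if_neg (Nat.succ_ne_zero j), Nat.add_sub_cancel, Nat.succ_sub_one]
  linear_combination -h3q - h1q


/-- The shifted Fuss–Catalan series
`E = Σ_k binom(n(k+1),k+1)/((n−1)(k+1)+1) X^k` (so that `1 + X·E` is the
Fuss–Catalan series) satisfies `X·E′ = E · Σ_{j≥1} binom(nj,j) X^j`, i.e. it is
the image under `e` of the Witt vector `*binom(n,1)`, whose ghost components
are `binom(nj,j)`. -/
theorem shifted_fuss_catalan_series_log_derivative (n : ℕ) (hn : 1 ≤ n) :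
    X * (d⁄dX ℚ (PowerSeries.mk fun k =>
        (Nat.choose (n * (k + 1)) (k + 1) : ℚ) / (((n : ℚ) - 1) * (k + 1) + 1))) =
      (PowerSeries.mk fun k =>
        (Nat.choose (n * (k + 1)) (k + 1) : ℚ) / (((n : ℚ) - 1) * (k + 1) + 1)) *
      (PowerSeries.mk fun j => if j = 0 then 0 else (Nat.choose (n * j) j : ℚ)) := by
  ext k
  cases k with
  | zero =>
    rw [coeff_mul, coeff_mul]
    simp
  | succ k =>
    rw [coeff_succ_X_mul, coeff_derivative, coeff_mk, coeff_mul,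
      Finset.Nat.sum_antidiagonal_eq_sum_range_succ_mk]
    simp only [coeff_mk]
    have hE : ∀ p : ℕ,
        (Nat.choose (n * (p + 1)) (p + 1) : ℚ) / (((n : ℚ) - 1) * ((p : ℚ) + 1) + 1)
          = Aq n 1 (p + 1) := fun p => Aq_one n p hn
    rw [hE (k + 1)]
    have hsum : ∀ i ∈ range (k + 1 + 1),
        (Nat.choose (n * (i + 1)) (i + 1) : ℚ) / (((n : ℚ) - 1) * ((i : ℚ) + 1) + 1) *
          (if k + 1 - i = 0 then 0 else (Nat.choose (n * (k + 1 - i)) (k + 1 - i) : ℚ))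
        = Aq n 1 (i + 1) *
          (if k + 1 - i = 0 then 0 else (Nat.choose (n * (k + 1 - i)) (k + 1 - i) : ℚ)) := by
      intro i _
      rw [hE i]
    rw [Finset.sum_congr rfl hsum, Finset.sum_range_succ]
    rw [if_pos (Nat.sub_self (k + 1)), mul_zero, add_zero]
    have hsum2 : ∀ i ∈ range (k + 1),
        Aq n 1 (i + 1) *
          (if k + 1 - i = 0 then 0 else (Nat.choose (n * (k + 1 - i)) (k + 1 - i) : ℚ))
        = Aq n 1 (i + 1) * (Nat.choose (n * (k + 1 - i)) (k + 1 - i) : ℚ) := by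
      intro i hi
      rw [Finset.mem_range] at hi
      rw [if_neg (by omega)]
    rw [Finset.sum_congr rfl hsum2]
    have hS := Sq_eq n hn (k + 1 + 1) 1
    have hSe := Sq_expand n 1 (k + 1)
    have hpeel := Finset.sum_range_succ
      (fun i => Aq n 1 (i + 1) * (Nat.choose (n * (k + 1 - i)) (k + 1 - i) : ℚ)) (k + 1)
    have hkey := Aq_one_mul n (k + 1) hn
    simp only [Nat.sub_self, Nat.mul_zero, Nat.choose_zero_right, Nat.cast_one, mul_one] at hpeel
    have hfinal : (∑ i ∈ range (k + 1),
        Aq n 1 (i + 1) * (Nat.choose (n * (k + 1 - i)) (k + 1 - i) : ℚ))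
        = (Nat.choose (n * (k + 1 + 1) + 1) (k + 1 + 1) : ℚ) - Aq n 1 (k + 1 + 1)
          - (Nat.choose (n * (k + 1 + 1)) (k + 1 + 1) : ℚ) := by
      rw [← hS, hSe, hpeel]; ring
    rw [hfinal]
    push_cast at hkey ⊢
    linarith [hkey]
end

section
/- For every integer n ≥ 1, the following identity holds in ℚ: binom(2n, n) = 2n · Σ_{k=1}^{n} (1/k) · Σ ∏_{j=1}^{k} catalan(i_j − 1), where the inner sum ranges over all compositions (i_1, …, i_k) of n into k positive parts (i_j ≥ 1, i_1 + ⋯ + i_k = n). (This identity expresses that the image under the morphism sending every word to 1 of the noncommutative power sum Φ_n, specialized at the Dyck code, equals the ghost component w_n(*2!/2!) = binom(2n,n)/2; catalan(i−1) counts the Dyck primes of semilength i.) -/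
/-!
Rotating the blocks of a composition permutes the compositions of length `k` and preserves
`∏ catalan (i_j - 1)`. Since the `k` rotations bring every block to the front once, and the
blocks sum to `n`, we get `n · Σ_{ℓ(c) = k} ∏ = k · Σ_{ℓ(c) = k} i_1 ∏`. So the right-hand
side is `2 Σ_c i_1 ∏ catalan (i_j - 1)` over all compositions of `n`. Splitting off the first
block `i_1 = i + 1`, using `Σ_{c ⊨ m} ∏ catalan (i_j - 1) = catalan m` (the Catalan recursion)
and `(i + 1) catalan i = centralBinom i`, this is `2 Σ_{i < n} centralBinom i · catalan (n-1-i)`,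
which telescopes to `centralBinom n` against `i · centralBinom i · centralBinom (n - i)`.
-/

open Finset

namespace Nat

theorem succ_mul_centralBinom_succ_mul_centralBinom (i j : ℕ) :
    (i + 1) * centralBinom (i + 1) * centralBinom j =
      i * centralBinom i * centralBinom (j + 1) +
        2 * (i + j + 1) * (centralBinom i * catalan j) := by
  refine Nat.eq_of_mul_eq_mul_left j.succ_pos ?_
  have hi := succ_mul_centralBinom_succ i
  have hj := succ_mul_centralBinom_succ j
  have hc := succ_mul_catalan_eq_centralBinom j
  zify at hi hj hc ⊢
  linear_combination ((j : ℤ) + 1) * (centralBinom j : ℤ) * hi - (i : ℤ) * centralBinom i * hj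
    - 2 * ((i : ℤ) + j + 1) * centralBinom i * hc

theorem two_mul_sum_range_centralBinom_mul_catalan (n : ℕ) :
    2 * ∑ i ∈ range (n + 1), centralBinom i * catalan (n - i) = centralBinom (n + 1) := by
  have partial_sum (k : ℕ) : ∀ j, k + j = n + 1 → k * centralBinom k * centralBinom j =
      (n + 1) * (2 * ∑ i ∈ range k, centralBinom i * catalan (n - i)) := by
    induction k with
    | zero => simp
    | succ k ih =>
      intro j hkj
      rw [succ_mul_centralBinom_succ_mul_centralBinom, ih (j + 1) (by omega), sum_range_succ,
        show n - k = j by omega, show k + j + 1 = n + 1 by omega]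
      ring
  simpa using (partial_sum (n + 1) 0 rfl).symm

end Nat

theorem List.sum_range_headI_rotate {α : Type*} [AddCommMonoid α] [Inhabited α] (l : List α) :
    ∑ j ∈ Finset.range l.length, (l.rotate j).headI = l.sum := by
  rw [← Fin.sum_univ_getElem, ← Fin.sum_univ_eq_sum_range]
  refine Fintype.sum_congr _ _ fun j => ?_
  have h := List.head?_rotate j.2
  rw [List.getElem?_eq_getElem j.2] at h
  cases hr : l.rotate j <;> simp_all

namespace Composition

variable {n : ℕ}

def rotate (c : Composition n) (j : ℕ) : Composition n where
  blocks := c.blocks.rotate j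
  blocks_pos hi := c.blocks_pos (List.mem_rotate.mp hi)
  blocks_sum := (c.blocks.rotate_perm j).sum_eq.trans c.blocks_sum

@[simp]
theorem rotate_blocks (c : Composition n) (j : ℕ) : (c.rotate j).blocks = c.blocks.rotate j :=
  rfl

@[simp]
theorem length_rotate (c : Composition n) (j : ℕ) : (c.rotate j).length = c.length :=
  List.length_rotate _ _

theorem rotate_injective (j : ℕ) : Function.Injective fun c : Composition n => c.rotate j :=
  fun _ _ h => Composition.ext (List.rotate_injective j (congrArg blocks h))

theorem sum_rotate {M : Type*} [AddCommMonoid M] (g : Composition n → M) (j : ℕ) :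
    ∑ c : Composition n, g (c.rotate j) = ∑ c, g c :=
  Fintype.sum_bijective _ (rotate_injective j).bijective_of_finite _ _ fun _ => rfl

theorem sum_range_headI_rotate (c : Composition n) :
    ∑ j ∈ range c.length, (c.rotate j).blocks.headI = n :=
  c.blocks.sum_range_headI_rotate.trans c.blocks_sum

theorem length_mul_sum_headI_mul_prod {R : Type*} [CommSemiring R] (f : ℕ → R) (k : ℕ) :
    (k : R) * ∑ c : Composition n with c.length = k, (c.blocks.headI : R) * (c.blocks.map f).prod
      = n * ∑ c : Composition n with c.length = k, (c.blocks.map f).prod := by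
  calc (k : R) * ∑ c : Composition n with c.length = k,
          (c.blocks.headI : R) * (c.blocks.map f).prod
      = ∑ j ∈ range k, ∑ c : Composition n with c.length = k,
          (c.blocks.headI : R) * (c.blocks.map f).prod := by
        rw [sum_const, card_range, nsmul_eq_mul]
    _ = ∑ j ∈ range k, ∑ c : Composition n with c.length = k,
          ((c.rotate j).blocks.headI : R) * ((c.rotate j).blocks.map f).prod := by
        refine sum_congr rfl fun j _ => ?_
        simp only [sum_filter]
        rw [← sum_rotate _ j]
        simp only [length_rotate]
    _ = ∑ c : Composition n with c.length = k,
          (∑ j ∈ range c.length, ((c.rotate j).blocks.headI : R)) * (c.blocks.map f).prod := by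
        rw [sum_comm]
        refine sum_congr rfl fun c hc => ?_
        rw [(mem_filter.mp hc).2]
        simp only [sum_mul, rotate_blocks, List.map_rotate, (List.rotate_perm _ _).prod_eq]
    _ = n * ∑ c : Composition n with c.length = k, (c.blocks.map f).prod := by
        simp only [← Nat.cast_sum, sum_range_headI_rotate, mul_sum]

theorem one_le_headI (c : Composition (n + 1)) : 1 ≤ c.blocks.headI := by
  cases hb : c.blocks with
  | nil => exact absurd hb (by simp [blocks_eq_nil])
  | cons a t => exact c.one_le_blocks (by simp [hb])

theorem sum_eq_sum_range_sum_cons {M : Type*} [AddCommMonoid M] (F : List ℕ → M) :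
    ∑ c : Composition (n + 1), F c.blocks =
      ∑ i ∈ range (n + 1), ∑ c : Composition (n - i), F ((i + 1) :: c.blocks) := by
  rw [← sum_sigma (range (n + 1)) (fun i => (univ : Finset (Composition (n - i))))
    (fun x => F ((x.1 + 1) :: x.2.blocks))]
  symm
  refine sum_bij'
    (fun x hx => ⟨(x.1 + 1) :: x.2.blocks, ?_, ?_⟩)
    (fun c _ => ⟨c.blocks.headI - 1, c.blocks.tail, ?_, ?_⟩) (fun _ _ => mem_univ _) ?_ ?_ ?_ ?_
  · intro b hb
    rcases List.mem_cons.mp hb with rfl | hb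
    · exact Nat.succ_pos _
    · exact x.2.blocks_pos hb
  · have := mem_range.mp (mem_sigma.mp hx).1
    simp only [List.sum_cons, x.2.blocks_sum]
    omega
  · exact fun hb => c.blocks_pos (List.mem_of_mem_tail hb)
  · have := c.blocks.headI_add_tail_sum
    have := c.one_le_headI
    rw [c.blocks_sum] at *
    omega
  · intro c _
    simp only [mem_sigma, mem_range, mem_univ, and_true]
    have := c.blocks.headI_le_sum
    rw [c.blocks_sum] at this
    omega
  · intro x _
    exact Sigma.ext rfl (heq_of_eq (Composition.ext rfl))
  · intro c _
    ext1
    show (c.blocks.headI - 1 + 1) :: c.blocks.tail = c.blocks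
    rw [Nat.sub_add_cancel c.one_le_headI]
    exact List.cons_head!_tail (by simp [blocks_eq_nil])
  · intro x _
    rfl

variable {R : Type*} [CommSemiring R]

theorem sum_prod_catalan (n : ℕ) :
    ∑ c : Composition n, (c.blocks.map fun i => (catalan (i - 1) : R)).prod = catalan n := by
  induction n using Nat.strong_induction_on with
  | _ n ih =>
    cases n with
    | zero =>
      have (c : Composition 0) : c.blocks = [] := c.blocks_eq_nil.mpr rfl
      simp [this, composition_card]
    | succ n =>
      rw [sum_eq_sum_range_sum_cons (fun l => (l.map fun i => (catalan (i - 1) : R)).prod),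
        catalan_succ', Nat.sum_antidiagonal_eq_sum_range_succ_mk]
      push_cast
      refine sum_congr rfl fun i _ => ?_
      simp only [List.map_cons, List.prod_cons, add_tsub_cancel_right, ← mul_sum]
      rw [ih (n - i) (by omega)]

theorem two_mul_sum_headI_mul_prod_catalan (n : ℕ) :
    2 * ∑ c : Composition (n + 1),
        (c.blocks.headI : R) * (c.blocks.map fun i => (catalan (i - 1) : R)).prod =
      Nat.centralBinom (n + 1) := by
  rw [sum_eq_sum_range_sum_cons
      (fun l => (l.headI : R) * (l.map fun i => (catalan (i - 1) : R)).prod),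
    ← Nat.two_mul_sum_range_centralBinom_mul_catalan]
  push_cast
  congr 1
  refine sum_congr rfl fun i _ => ?_
  simp only [List.headI_cons, List.map_cons, List.prod_cons, add_tsub_cancel_right, ← mul_assoc,
    ← mul_sum, sum_prod_catalan, ← succ_mul_catalan_eq_centralBinom]
  push_cast
  ring

end Composition

/-- The identity `binom(2n,n) = 2n · Σ_{k=1}^{n} (1/k) Σ_{i₁+⋯+i_k=n}
∏_j catalan(i_j − 1)`, where the inner sum is over compositions of `n` into `k`
positive parts: the image of the noncommutative power sum `Φ_n` of the Dyck
code under the morphism sending every word to `1` is the ghost component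
`binom(2n,n)/2`. -/
theorem central_binom_eq_sum_over_compositions_of_catalan (n : ℕ) (hn : 1 ≤ n) :
    (Nat.choose (2 * n) n : ℚ) =
      2 * n * ∑ k ∈ Finset.Icc 1 n, (1 / (k : ℚ)) *
        ∑ c ∈ Finset.univ.filter (fun c : Composition n => c.length = k),
          (c.blocks.map (fun i => (catalan (i - 1) : ℚ))).prod := by
  obtain ⟨m, rfl⟩ : ∃ m, n = m + 1 := ⟨n - 1, by omega⟩
  have average_over_length (k : ℕ) (hk : k ∈ Icc 1 (m + 1)) :
      1 / (k : ℚ) * ∑ c : Composition (m + 1) with c.length = k,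
          (c.blocks.map fun i => (catalan (i - 1) : ℚ)).prod =
        1 / ((m + 1 : ℕ) : ℚ) * ∑ c : Composition (m + 1) with c.length = k,
          (c.blocks.headI : ℚ) * (c.blocks.map fun i => (catalan (i - 1) : ℚ)).prod := by
    have hk0 : (k : ℚ) ≠ 0 := by have := (mem_Icc.mp hk).1; positivity
    field_simp
    linear_combination
      (Composition.length_mul_sum_headI_mul_prod (fun i => (catalan (i - 1) : ℚ)) k).symm
  rw [sum_congr rfl average_over_length, ← mul_sum, sum_fiberwise_of_maps_to
    fun c _ => mem_Icc.mpr ⟨c.length_pos_iff.mpr m.succ_pos, c.length_le⟩,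
    ← Nat.centralBinom_eq_two_mul_choose, ← Composition.two_mul_sum_headI_mul_prod_catalan]
  field_simp
end

section
/- Fix integers n ≥ 1, p ≥ 1 and m ≥ 1. Then the following identity holds in ℚ: binom(nmp, mp) = m · Σ_{w ∈ P(n,p,m)} 1/(c(w)+1). (This identity expresses that the image under the morphism sending every word to 1 of the noncommutative power sum Φ_m, specialized at the staircase lattice paths, equals the ghost component w_m(*binom(np,p)) = binom(nmp, mp).) -/
/-- `latticePaths n p m` is the set of words over `{U, R}` (here `true` codes a
right step `R` and `false` codes an up step `U`) having `mp` letters `R`,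
`(n−1)mp` letters `U`, and such that every prefix with `r` letters `R` has at
most `(n−1)p(⌊r/p⌋+1)` letters `U`: the lattice paths from `(0,0)` to
`((n−1)mp, mp)` never going above the staircase `(↑^{(n−1)p}→^p)^m`. -/
def latticePaths (n p m : ℕ) : Set (List Bool) :=
  {w | w.count true = m * p ∧ w.count false = (n - 1) * m * p ∧
    ∀ v, v <+: w → v.count false ≤ (n - 1) * p * (v.count true / p + 1)}

/-- The number of intermediate corner points `((n−1)kp, kp)`, `0 < k < m`,
through which the path coded by `w` passes. -/
noncomputable def cornerCount (n p m : ℕ) (w : List Bool) : ℕ :=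
  Set.ncard {k : ℕ | 0 < k ∧ k < m ∧
    ∃ v, v <+: w ∧ v.count true = k * p ∧ v.count false = (n - 1) * k * p}

/-!
Cut a word with `mp` letters `R` and `(n-1)mp` letters `U` into `m` blocks of length `np` and
let `e j` be the number of `R` in the first `j` blocks minus `jp`, read cyclically. The rotation of
the word by `i` blocks lies below the staircase exactly when `i` minimises `e`, and then its
corners are the other minimisers. So if `e` has `c + 1` minimisers, exactly `c + 1` block
rotations of the word are staircase paths, each with `c` corners, and the word contributes total
weight `1` to the sum of `1 / (c(w) + 1)` over its rotations. Summing over all `binom(nmp, mp)`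
words and using that each block rotation permutes the words gives the identity.
-/

open Finset Function

theorem List.take_append_take_rotate {α : Type*} {l : List α} {n k : ℕ}
    (hn : n ≤ l.length) (hk : k ≤ l.length) :
    l.take n ++ (l.rotate n).take k = (l ++ l).take (n + k) := by
  have hlen : (l.take n).length = n := List.length_take_of_le hn
  have hk' : k ≤ (l.drop n ++ l.take n).length := by
    simpa only [List.length_append, List.length_drop, hlen, Nat.sub_add_cancel hn] using hk
  rw [List.rotate_eq_drop_append_take hn, ← List.take_append_of_le_length hk' (l₂ := l.drop n),
    List.append_assoc, ← List.take_length_add_append, hlen]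
  conv_rhs => rw [← List.take_append_drop n l]
  simp only [List.append_assoc]

theorem List.IsPrefix.count_take_le {α : Type*} [BEq α] {v w : List α} (h : v <+: w) (a : α)
    (L : ℕ) : (w.take L).count a ≤ v.count a + (L - v.length) := by
  obtain ⟨r, rfl⟩ := h
  rw [List.take_append, List.count_append]
  exact Nat.add_le_add ((List.take_sublist L v).count_le a)
    (List.count_le_length.trans (List.length_take_le _ r))

theorem Finset.sum_comp_rotate {α β : Type*} [AddCommMonoid β] {S : Finset (List α)} {r : ℕ}
    (hS : ∀ w ∈ S, w.rotate r ∈ S) (g : List α → β) :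
    ∑ w ∈ S, g (w.rotate r) = ∑ w ∈ S, g w := by
  let e : List α ↪ List α := ⟨(·.rotate r), List.rotate_injective r⟩
  have hSe : S.map e = S := map_eq_of_subset fun _ hx => by
    obtain ⟨w, hw, rfl⟩ := mem_map.1 hx
    exact hS w hw
  conv_rhs => rw [← hSe, sum_map]
  rfl

def binaryWords (N T : ℕ) : Finset (List Bool) :=
  (powersetCard T (univ : Finset (Fin N))).image fun s => List.ofFn fun i => decide (i ∈ s)

theorem count_true_ofFn {N : ℕ} (g : Fin N → Bool) :
    (List.ofFn g).count true = #{i | g i = true} := by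
  rw [← List.Vector.toList_ofFn, ← Fin.card_filter_univ_eq_vector_get_eq_count]
  simp only [List.Vector.get_ofFn]

theorem mem_binaryWords {N T : ℕ} {w : List Bool} :
    w ∈ binaryWords N T ↔ w.length = N ∧ w.count true = T := by
  constructor
  · intro hw
    obtain ⟨s, hs, rfl⟩ := mem_image.1 hw
    rw [List.length_ofFn, count_true_ofFn, ← (mem_powersetCard_univ.1 hs)]
    simp
  · rintro ⟨rfl, rfl⟩
    refine mem_image.2
      ⟨univ.filter fun i : Fin w.length => w[i] = true, mem_powersetCard_univ.2 ?_, ?_⟩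
    · rw [← count_true_ofFn]; simp
    · simp

theorem card_binaryWords (N T : ℕ) : #(binaryWords N T) = N.choose T := by
  rw [binaryWords, card_image_of_injective, card_powersetCard, card_univ, Fintype.card_fin]
  intro s t hst
  ext i
  simpa using congrFun (List.ofFn_injective hst) i

theorem Nat.filter_range_add_card_eq_of_periodic (n a : ℕ) (p : ℕ → Prop) [DecidablePred p]
    (pp : Periodic p a) : #{k ∈ range a | p (n + k)} = #{k ∈ range a | p k} := by
  rw [← Nat.count_eq_card_filter_range p, ← Nat.filter_Ico_card_eq_of_periodic n a p pp,
    card_filter, card_filter, sum_Ico_eq_sum_range, Nat.add_sub_cancel_left]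

section CycleLemma

variable {α : Type*} [LinearOrder α] {f : ℕ → α} {m i : ℕ}

def minIndices (f : ℕ → α) (m : ℕ) : Finset ℕ :=
  {i ∈ range m | ∀ j < m, f i ≤ f j}

theorem mem_minIndices : i ∈ minIndices f m ↔ i < m ∧ ∀ j < m, f i ≤ f j := by
  rw [minIndices, mem_filter, mem_range]

theorem minIndices_nonempty (hm : 0 < m) : (minIndices f m).Nonempty := by
  obtain ⟨i, hi, hmin⟩ := exists_min_image (range m) f (nonempty_range_iff.2 hm.ne')
  exact ⟨i, mem_minIndices.2 ⟨mem_range.1 hi, fun j hj => hmin j (mem_range.2 hj)⟩⟩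

theorem Function.Periodic.forall_le_add_iff (hf : Periodic f m) (hi : i < m) :
    (∀ k ≤ m, f i ≤ f (i + k)) ↔ ∀ j < m, f i ≤ f j := by
  constructor
  · intro h j hj
    rcases le_or_gt i j with hij | hji
    · simpa [Nat.add_sub_cancel' hij] using h (j - i) (by omega)
    · simpa [show i + (j + m - i) = j + m by omega, hf j] using h (j + m - i) (by omega)
  · intro h k _
    rw [← hf.map_mod_nat (i + k)]
    exact h _ (Nat.mod_lt _ (by omega))

theorem filter_eq_minIndices (hi : i ∈ minIndices f m) :
    {j ∈ range m | f j = f i} = minIndices f m := by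
  obtain ⟨him, hmin⟩ := mem_minIndices.1 hi
  ext j
  simp only [mem_filter, mem_range, mem_minIndices]
  constructor
  · rintro ⟨hj, hji⟩
    exact ⟨hj, hji ▸ hmin⟩
  · rintro ⟨hj, hjmin⟩
    exact ⟨hj, le_antisymm (hjmin i him) (hmin j hj)⟩

theorem Function.Periodic.card_filter_pos_add_eq (hf : Periodic f m) (hi : i ∈ minIndices f m) :
    #{k ∈ range m | 0 < k ∧ f (i + k) = f i} + 1 = #(minIndices f m) := by
  have him := (mem_minIndices.1 hi).1
  have herase : {k ∈ range m | 0 < k ∧ f (i + k) = f i} =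
      {k ∈ range m | f (i + k) = f i}.erase 0 := by
    ext k
    simp only [mem_filter, mem_erase, mem_range, Nat.pos_iff_ne_zero]
    tauto
  rw [herase, card_erase_add_one (mem_filter.2 ⟨mem_range.2 (by omega), by rw [add_zero]⟩),
    Nat.filter_range_add_card_eq_of_periodic i m (f · = f i) (fun j => by simp only [hf j]),
    filter_eq_minIndices hi]

end CycleLemma

section Staircase

variable {a p m : ℕ} {w : List Bool}

theorem corner_le_count_of_staircase
    (h : ∀ v, v <+: w → v.count false ≤ a * (v.count true / p + 1)) {k : ℕ}
    (hk : k * (a + p) ≤ w.length) : k * p ≤ (w.take (k * (a + p))).count true := by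
  set v := w.take (k * (a + p))
  have hv : v.count true + v.count false = k * (a + p) := by
    rw [List.count_true_add_count_false, List.length_take_of_le hk]
  by_contra! hlt
  have hq : v.count true / p + 1 ≤ k := Nat.div_lt_of_lt_mul (by linarith)
  have := (h v (List.take_prefix _ w)).trans (Nat.mul_le_mul_left a hq)
  linarith

theorem staircase_of_corner_le (hp : 0 < p) (hw : w.length = m * (a + p))
    (h : ∀ k ≤ m, k * p ≤ (w.take (k * (a + p))).count true) {v : List Bool} (hv : v <+: w) :
    v.count false ≤ a * (v.count true / p + 1) := by
  set j := v.count true / p + 1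
  have hlen := List.count_true_add_count_false v
  rcases le_or_gt j m with hjm | hmj
  · -- `v` has fewer than `j * p` letters `R`, so it must end before the `j`-th corner
    have hcorner := (h j hjm).trans (hv.count_take_le true (j * (a + p)))
    have hlt : v.count true < j * p := by rw [mul_comm]; exact Nat.lt_mul_div_succ _ hp
    have : j * (a + p) = j * a + j * p := by ring
    rw [mul_comm a j]
    omega
  · have hall := List.count_true_add_count_false w
    have hm := h m le_rfl
    rw [← hw, List.take_length] at hm
    have : v.count false ≤ w.count false := hv.sublist.count_le false
    have : m * a ≤ j * a := Nat.mul_le_mul_right a hmj.le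
    have : m * (a + p) = m * a + m * p := by ring
    rw [mul_comm a j]
    omega

theorem staircase_iff_corner_le (hp : 0 < p) (hw : w.length = m * (a + p)) :
    (∀ v, v <+: w → v.count false ≤ a * (v.count true / p + 1)) ↔
      ∀ k ≤ m, k * p ≤ (w.take (k * (a + p))).count true :=
  ⟨fun h _ hk => corner_le_count_of_staircase h (hw ▸ Nat.mul_le_mul_right _ hk),
    fun h _ hv => staircase_of_corner_le hp hw h hv⟩

end Staircase

section LatticePaths

variable {n p m : ℕ} {w : List Bool}

theorem length_of_mem_latticePaths (hn : 1 ≤ n) (hw : w ∈ latticePaths n p m) :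
    w.length = m * (n * p) := by
  obtain ⟨ht, hf, -⟩ := hw
  obtain ⟨n, rfl⟩ := Nat.exists_eq_add_of_le' hn
  rw [← List.count_true_add_count_false, ht, hf, Nat.add_sub_cancel]
  ring

theorem mem_latticePaths_iff (hn : 1 ≤ n) (hp : 0 < p) (hw : w.length = m * (n * p))
    (hc : w.count true = m * p) :
    w ∈ latticePaths n p m ↔ ∀ k ≤ m, k * p ≤ (w.take (k * (n * p))).count true := by
  obtain ⟨n, rfl⟩ := Nat.exists_eq_add_of_le' hn
  have hb : (n + 1) * p = n * p + p := by ring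
  have hf : w.count false = n * m * p := by
    have := List.count_true_add_count_false w
    rw [hw, hc] at this
    linarith
  rw [hb] at hw ⊢
  simp only [latticePaths, Set.mem_ofPred_eq, Nat.add_sub_cancel, hc, hf, true_and]
  exact staircase_iff_corner_le hp hw

theorem cornerCount_eq_card (hn : 1 ≤ n) (hw : w.length = m * (n * p)) :
    cornerCount n p m w =
      #{k ∈ range m | 0 < k ∧ (w.take (k * (n * p))).count true = k * p} := by
  obtain ⟨n, rfl⟩ := Nat.exists_eq_add_of_le' hn
  rw [cornerCount, ← Set.ncard_coe_finset]
  congr 1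
  ext k
  simp only [coe_filter, mem_range, Set.mem_ofPred_eq, Nat.add_sub_cancel]
  constructor
  · rintro ⟨hk0, hkm, v, hv, ht, hf⟩
    have hvlen : v.length = k * ((n + 1) * p) := by
      rw [← List.count_true_add_count_false, ht, hf]; ring
    rw [List.prefix_iff_eq_take.1 hv, hvlen] at ht
    exact ⟨hkm, hk0, ht⟩
  · rintro ⟨hkm, hk0, ht⟩
    have hvlen := List.length_take_of_le (l := w) (hw ▸ Nat.mul_le_mul_right _ hkm.le)
    refine ⟨hk0, hkm, _, List.take_prefix _ w, ht, ?_⟩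
    have := List.count_true_add_count_false (w.take (k * ((n + 1) * p)))
    rw [ht, hvlen] at this
    linarith

end LatticePaths

section Rotation

variable {u : List Bool} {m b p : ℕ}

-- The excess of right steps over the diagonal at the end of block `j`, extended `m`-periodically.
def cornerExcess (u : List Bool) (m b p j : ℕ) : ℤ :=
  (u.take (j % m * b)).count true - (j % m * p : ℕ)

theorem cornerExcess_periodic : Periodic (cornerExcess u m b p) m := by
  intro j
  simp only [cornerExcess, Nat.add_mod_right]

theorem count_take_append_self (hl : u.length = m * b) (hc : u.count true = m * p) {j : ℕ}
    (hj : j < 2 * m) :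
    (((u ++ u).take (j * b)).count true : ℤ) = cornerExcess u m b p j + j * p := by
  rcases lt_or_ge j m with hjm | hjm
  · rw [List.take_append_of_le_length (by rw [hl]; exact Nat.mul_le_mul_right b hjm.le),
      cornerExcess, Nat.mod_eq_of_lt hjm]
    push_cast
    ring
  · obtain ⟨r, rfl⟩ := Nat.exists_eq_add_of_le hjm
    rw [List.take_append, List.take_of_length_le (by rw [hl]; exact Nat.mul_le_mul_right b hjm),
      hl, ← Nat.sub_mul, Nat.add_sub_cancel_left, List.count_append, hc, cornerExcess,
      Nat.add_mod_left, Nat.mod_eq_of_lt (by omega)]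
    push_cast
    ring

theorem count_take_rotate (hl : u.length = m * b) (hc : u.count true = m * p) {i k : ℕ}
    (hi : i < m) (hk : k ≤ m) :
    (((u.rotate (i * b)).take (k * b)).count true : ℤ) =
      cornerExcess u m b p (i + k) - cornerExcess u m b p i + k * p := by
  have hsplit := congrArg (fun l => (l.count true : ℤ))
    (List.take_append_take_rotate (l := u) (n := i * b) (k := k * b)
      (by rw [hl]; exact Nat.mul_le_mul_right b hi.le)
      (by rw [hl]; exact Nat.mul_le_mul_right b hk))
  simp only [List.count_append, Nat.cast_add, ← Nat.add_mul] at hsplit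
  rw [count_take_append_self hl hc (by omega)] at hsplit
  have hprefix := count_take_append_self hl hc (show i < 2 * m by omega)
  rw [List.take_append_of_le_length (by rw [hl]; exact Nat.mul_le_mul_right b hi.le)] at hprefix
  push_cast at hsplit hprefix ⊢
  linarith

end Rotation

section RotatedPaths

variable {n p m : ℕ} {u : List Bool}

theorem rotate_mem_latticePaths_iff (hn : 1 ≤ n) (hp : 0 < p) (hl : u.length = m * (n * p))
    (hc : u.count true = m * p) {i : ℕ} (hi : i < m) :
    u.rotate (i * (n * p)) ∈ latticePaths n p m ↔
      i ∈ minIndices (cornerExcess u m (n * p) p) m := by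
  rw [mem_latticePaths_iff hn hp (by rw [List.length_rotate, hl])
    (by rw [(List.rotate_perm u _).count_eq, hc]), mem_minIndices,
    ← cornerExcess_periodic.forall_le_add_iff hi, and_iff_right hi]
  refine forall₂_congr fun k hk => ?_
  zify
  rw [count_take_rotate hl hc hi hk, le_add_iff_nonneg_left, sub_nonneg]

theorem cornerCount_rotate_add_one (hn : 1 ≤ n) (hl : u.length = m * (n * p))
    (hc : u.count true = m * p) {i : ℕ} (hi : i ∈ minIndices (cornerExcess u m (n * p) p) m) :
    cornerCount n p m (u.rotate (i * (n * p))) + 1 =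
      #(minIndices (cornerExcess u m (n * p) p) m) := by
  have him := (mem_minIndices.1 hi).1
  rw [cornerCount_eq_card hn (by rw [List.length_rotate, hl]),
    ← cornerExcess_periodic.card_filter_pos_add_eq hi]
  congr 2
  ext k
  simp only [mem_filter, mem_range, and_congr_right_iff]
  intro hk _
  zify
  rw [count_take_rotate hl hc him hk.le, add_eq_right, sub_eq_zero]

theorem sum_indicator_rotate_eq_one (hn : 1 ≤ n) (hp : 0 < p) (hm : 0 < m)
    (hl : u.length = m * (n * p)) (hc : u.count true = m * p) :
    ∑ i ∈ range m, (latticePaths n p m).indicator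
      (fun w => (1 : ℚ) / (cornerCount n p m w + 1)) (u.rotate (i * (n * p))) = 1 := by
  set M := minIndices (cornerExcess u m (n * p) p) m
  have hterm : ∀ i ∈ range m, (latticePaths n p m).indicator
      (fun w => (1 : ℚ) / (cornerCount n p m w + 1)) (u.rotate (i * (n * p))) =
        if i ∈ M then 1 / (#M : ℚ) else 0 := by
    intro i hi
    have hmem := rotate_mem_latticePaths_iff hn hp hl hc (mem_range.1 hi)
    split_ifs with hiM
    · rw [Set.indicator_of_mem (hmem.2 hiM), ← cornerCount_rotate_add_one hn hl hc hiM]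
      push_cast
      rfl
    · exact Set.indicator_of_notMem (mt hmem.1 hiM) _
  have hMne : (#M : ℚ) ≠ 0 := by exact_mod_cast (minIndices_nonempty hm).card_pos.ne'
  rw [sum_congr rfl hterm, sum_ite_mem,
    inter_eq_right.2 fun i hi => mem_range.2 (mem_minIndices.1 hi).1, sum_const, nsmul_eq_mul,
    mul_one_div_cancel hMne]

end RotatedPaths

/-- The identity `binom(nmp, mp) = m · Σ_{w ∈ P(n,p,m)} 1/(c(w)+1)`: the image
under the morphism sending every word to `1` of the noncommutative power sum
`Φ_m`, specialized at the staircase lattice paths, equals the ghost component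
`w_m(*binom(np,p)) = binom(nmp,mp)`. -/
theorem choose_eq_sum_over_lattice_paths (n p m : ℕ)
    (hn : 1 ≤ n) (hp : 1 ≤ p) (hm : 1 ≤ m) :
    (Nat.choose (n * m * p) (m * p) : ℚ) =
      m * ∑ᶠ w ∈ latticePaths n p m, (1 : ℚ) / (cornerCount n p m w + 1) := by
  set F := (latticePaths n p m).indicator fun w => (1 : ℚ) / (cornerCount n p m w + 1)
  set Q := binaryWords (m * (n * p)) (m * p)
  have hQrot : ∀ i, ∀ w ∈ Q, w.rotate i ∈ Q := fun i w hw => by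
    rw [mem_binaryWords, List.length_rotate, (List.rotate_perm w i).count_eq]
    exact mem_binaryWords.1 hw
  have hsupp : support F ⊆ Q := fun w hw => mem_binaryWords.2
    ⟨length_of_mem_latticePaths hn (Set.support_indicator_subset hw),
      (Set.support_indicator_subset hw).1⟩
  calc (Nat.choose (n * m * p) (m * p) : ℚ)
      = ∑ u ∈ Q, ∑ i ∈ range m, F (u.rotate (i * (n * p))) := by
        rw [show n * m * p = m * (n * p) by ring, ← card_binaryWords, cast_card]
        exact sum_congr rfl fun u hu => (sum_indicator_rotate_eq_one hn hp hm
          (mem_binaryWords.1 hu).1 (mem_binaryWords.1 hu).2).symm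
    _ = ∑ i ∈ range m, ∑ u ∈ Q, F u := by
        rw [sum_comm]
        exact sum_congr rfl fun i _ => sum_comp_rotate (hQrot _) F
    _ = m * ∑ᶠ w ∈ latticePaths n p m, (1 : ℚ) / (cornerCount n p m w + 1) := by
        rw [sum_const, card_range, nsmul_eq_mul, finsum_mem_def,
          finsum_eq_sum_of_support_subset F hsupp]
end
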